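/- arXiv:2505.17258 — 11 statements merged into one kernel-verified Lean document; each statement's English description precedes it below -/
import Mathlib

section
/- Let U and V be affine subspaces of E with U ∩ V nonempty. Then the cosine of the Friedrichs angle between U and V satisfies 0 ≤ c_F(U, V) < 1. -/
open RealInnerProductSpace

/-- The cosine of the Friedrichs angle between two affine subspaces `U` and `V`:
`c_F(U,V) = sup { ⟪u,v⟫ : u ∈ Û ∩ (Û ∩ V̂)^⊥, v ∈ V̂ ∩ (Û ∩ V̂)^⊥, ‖u‖ ≤ 1, ‖v‖ ≤ 1 }`,
where `Û`, `V̂` are the direction subspaces of `U` and `V`. -/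
noncomputable def cF {E : Type*} [NormedAddCommGroup E] [InnerProductSpace ℝ E]
    (U V : AffineSubspace ℝ E) : ℝ :=
  sSup { r : ℝ | ∃ u v : E,
    u ∈ (U.direction ⊓ (U.direction ⊓ V.direction)ᗮ : Submodule ℝ E) ∧
    v ∈ (V.direction ⊓ (U.direction ⊓ V.direction)ᗮ : Submodule ℝ E) ∧
    ‖u‖ ≤ 1 ∧ ‖v‖ ≤ 1 ∧ r = ⟪u, v⟫ }

theorem friedrichs_angle_cos_lt_one
    {E : Type*} [NormedAddCommGroup E] [InnerProductSpace ℝ E] [FiniteDimensional ℝ E]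
    (U V : AffineSubspace ℝ E)
    (hUV : ((U ⊓ V : AffineSubspace ℝ E) : Set E).Nonempty) :
    0 ≤ cF U V ∧ cF U V < 1 := by
  classical
  set M : Submodule ℝ E := U.direction ⊓ (U.direction ⊓ V.direction)ᗮ with hM
  set N : Submodule ℝ E := V.direction ⊓ (U.direction ⊓ V.direction)ᗮ with hN
  set S : Set ℝ := { r : ℝ | ∃ u v : E,
    u ∈ M ∧ v ∈ N ∧ ‖u‖ ≤ 1 ∧ ‖v‖ ≤ 1 ∧ r = ⟪u, v⟫ } with hSdef
  have hcF : cF U V = sSup S := rfl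
  -- 0 is in S
  have h0 : (0 : ℝ) ∈ S := ⟨0, 0, M.zero_mem, N.zero_mem, by simp, by simp, by simp⟩
  -- every element of S is ≤ 1
  have hle1 : ∀ r ∈ S, r ≤ 1 := by
    rintro r ⟨u, v, hu, hv, hnu, hnv, rfl⟩
    calc ⟪u, v⟫ ≤ ‖u‖ * ‖v‖ := real_inner_le_norm u v
      _ ≤ 1 := mul_le_one₀ hnu (norm_nonneg _) hnv
  have hbdd : BddAbove S := ⟨1, hle1⟩
  -- compactness of the constraint set
  have hK : IsCompact (((M : Set E) ∩ Metric.closedBall 0 1) ×ˢ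
      ((N : Set E) ∩ Metric.closedBall 0 1)) := by
    have hMc : IsClosed (M : Set E) := Submodule.closed_of_finiteDimensional M
    have hNc : IsClosed (N : Set E) := Submodule.closed_of_finiteDimensional N
    exact ((isCompact_closedBall (0:E) 1).inter_left hMc).prod
      ((isCompact_closedBall (0:E) 1).inter_left hNc)
  have hKne : (((M : Set E) ∩ Metric.closedBall 0 1) ×ˢ
      ((N : Set E) ∩ Metric.closedBall 0 1)).Nonempty :=
    ⟨(0, 0), ⟨⟨M.zero_mem, by simp⟩, ⟨N.zero_mem, by simp⟩⟩⟩
  obtain ⟨p₀, hp₀, hmax'⟩ := hK.exists_isMaxOn hKne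
    ((continuous_inner (𝕜 := ℝ) (E := E)).continuousOn)
  have hmax : ∀ q ∈ ((M : Set E) ∩ Metric.closedBall 0 1) ×ˢ
      ((N : Set E) ∩ Metric.closedBall 0 1), ⟪q.1, q.2⟫ ≤ ⟪p₀.1, p₀.2⟫ :=
    fun q hq => hmax' hq
  obtain ⟨⟨hu₀M, hu₀b⟩, ⟨hv₀N, hv₀b⟩⟩ := hp₀
  rw [Metric.mem_closedBall, dist_zero_right] at hu₀b hv₀b
  -- the maximum value is < 1
  have hlt : ⟪p₀.1, p₀.2⟫ < 1 := by
    rcases lt_or_eq_of_le (hle1 _ ⟨p₀.1, p₀.2, hu₀M, hv₀N, hu₀b, hv₀b, rfl⟩) with h | h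
    · exact h
    · exfalso
      have hnu : ‖p₀.1‖ = 1 := by
        have h1 : (1:ℝ) ≤ ‖p₀.1‖ * ‖p₀.2‖ := h ▸ real_inner_le_norm p₀.1 p₀.2
        have := mul_le_of_le_one_right (norm_nonneg p₀.1) hv₀b
        linarith
      have hnv : ‖p₀.2‖ = 1 := by
        have h1 : (1:ℝ) ≤ ‖p₀.1‖ * ‖p₀.2‖ := h ▸ real_inner_le_norm p₀.1 p₀.2
        have := mul_le_of_le_one_left (norm_nonneg p₀.2) hu₀b
        linarith
      have heq : p₀.1 = p₀.2 := (inner_eq_one_iff_of_norm_eq_one hnu hnv).mp h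
      -- then p₀.1 ∈ M ⊓ N, hence = 0
      have hz : p₀.1 = 0 := by
        have h1 : p₀.1 ∈ U.direction ⊓ V.direction := ⟨hu₀M.1, heq ▸ hv₀N.1⟩
        have h2 : p₀.1 ∈ (U.direction ⊓ V.direction)ᗮ := hu₀M.2
        have := (Submodule.mem_orthogonal _ _).mp h2 p₀.1 h1
        exact inner_self_eq_zero.mp this
      rw [hz, norm_zero] at hnu
      norm_num at hnu
  have hsup_le : sSup S ≤ ⟪p₀.1, p₀.2⟫ := by
    apply csSup_le ⟨0, h0⟩
    rintro r ⟨u, v, hu, hv, hnu, hnv, rfl⟩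
    exact hmax (u, v) ⟨⟨hu, by simpa using hnu⟩, ⟨hv, by simpa using hnv⟩⟩
  refine ⟨?_, ?_⟩
  · rw [hcF]; exact le_csSup hbdd h0
  · rw [hcF]; exact lt_of_le_of_lt hsup_le hlt
end

section
/- Let U and V be nonempty affine subspaces of E with U ∩ V nonempty, and let r(U,V) := sqrt(1 + 4/(1 − c_F(U,V)²)). Then r(U,V) > 1 and, for every x ∈ E, dist(x, U ∩ V) ≤ r(U,V) · max{dist(x, U), dist(x, V)}. -/
open RealInnerProductSpace

private lemma le_infDist_aux {E : Type*} [NormedAddCommGroup E] {s : Set E} {x : E} {b : ℝ}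
    (hs : s.Nonempty) (h : ∀ y ∈ s, b ≤ dist x y) : b ≤ Metric.infDist x s := by
  by_contra hlt
  push_neg at hlt
  obtain ⟨y, hy, hd⟩ := (Metric.infDist_lt_iff hs).1 hlt
  exact absurd (h y hy) (not_le.2 hd)

private lemma proj_min {E : Type*} [NormedAddCommGroup E] [InnerProductSpace ℝ E]
    [FiniteDimensional ℝ E] (K : Submodule ℝ E) (y m : E) (hm : m ∈ K) :
    ‖y - (Submodule.orthogonalProjectionOnto K y : E)‖ ≤ ‖y - m‖ := by
  set p := ((Submodule.orthogonalProjectionOnto K y : E)) with hp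
  have hin : ⟪y - p, p - m⟫ = 0 :=
    Submodule.starProjection_inner_eq_zero y (p - m)
      (Submodule.sub_mem K (Submodule.orthogonalProjectionOnto K y).2 hm)
  have hsplit : y - m = (y - p) + (p - m) := by abel
  have hexp : ‖y - m‖ ^ 2 = ‖y - p‖ ^ 2 + 2 * ⟪y - p, p - m⟫ + ‖p - m‖ ^ 2 := by
    rw [hsplit, norm_add_sq_real]
  rw [hin] at hexp
  nlinarith [norm_nonneg (y - m), norm_nonneg (y - p), norm_nonneg (p - m)]

set_option maxHeartbeats 1000000 in
theorem error_bound_two_affine_subspaces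
    {E : Type*} [NormedAddCommGroup E] [InnerProductSpace ℝ E] [FiniteDimensional ℝ E]
    (U V : AffineSubspace ℝ E) (hU : (U : Set E).Nonempty) (hV : (V : Set E).Nonempty)
    (hUV : ((U ⊓ V : AffineSubspace ℝ E) : Set E).Nonempty) :
    1 < Real.sqrt (1 + 4 / (1 - cF U V ^ 2)) ∧
      ∀ x : E, Metric.infDist x ((U ⊓ V : AffineSubspace ℝ E) : Set E) ≤
        Real.sqrt (1 + 4 / (1 - cF U V ^ 2)) *
          max (Metric.infDist x (U : Set E)) (Metric.infDist x (V : Set E)) := by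
  obtain ⟨z, hz⟩ := hUV
  rw [SetLike.mem_coe, AffineSubspace.mem_inf_iff] at hz
  obtain ⟨hzU, hzV⟩ := hz
  set Du := U.direction with hDu
  set Dv := V.direction with hDv
  set W := (Du ⊓ Dv : Submodule ℝ E) with hWdef
  set S := { r : ℝ | ∃ u v : E,
    u ∈ (Du ⊓ Wᗮ : Submodule ℝ E) ∧ v ∈ (Dv ⊓ Wᗮ : Submodule ℝ E) ∧
    ‖u‖ ≤ 1 ∧ ‖v‖ ≤ 1 ∧ r = ⟪u, v⟫ } with hSdef
  have hcF : cF U V = sSup S := rfl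
  have hSne : S.Nonempty := by
    refine ⟨0, 0, 0, Submodule.zero_mem _, Submodule.zero_mem _, ?_, ?_, ?_⟩ <;> simp
  have hSbdd : BddAbove S := by
    refine ⟨1, fun r hr => ?_⟩
    obtain ⟨u, v, hu, hv, hu1, hv1, rfl⟩ := hr
    calc ⟪u, v⟫ ≤ ‖u‖ * ‖v‖ := real_inner_le_norm u v
      _ ≤ 1 := mul_le_one₀ hu1 (norm_nonneg v) hv1
  have hc0 : 0 ≤ sSup S := by
    apply le_csSup hSbdd
    refine ⟨0, 0, Submodule.zero_mem _, Submodule.zero_mem _, ?_, ?_, ?_⟩ <;> simp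
  -- compactness: the sup is attained
  have hMcl : IsClosed ((Du ⊓ Wᗮ : Submodule ℝ E) : Set E) :=
    (Du ⊓ Wᗮ).closed_of_finiteDimensional
  have hNcl : IsClosed ((Dv ⊓ Wᗮ : Submodule ℝ E) : Set E) :=
    (Dv ⊓ Wᗮ).closed_of_finiteDimensional
  have hK : IsCompact ((Metric.closedBall (0 : E) 1 ∩ (Du ⊓ Wᗮ : Submodule ℝ E)) ×ˢ
      (Metric.closedBall (0 : E) 1 ∩ (Dv ⊓ Wᗮ : Submodule ℝ E))) :=
    (((isCompact_closedBall (0 : E) 1).inter_right hMcl)).prod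
      (((isCompact_closedBall (0 : E) 1).inter_right hNcl))
  have himg : S = (fun p : E × E => ⟪p.1, p.2⟫) ''
      ((Metric.closedBall (0 : E) 1 ∩ (Du ⊓ Wᗮ : Submodule ℝ E)) ×ˢ
       (Metric.closedBall (0 : E) 1 ∩ (Dv ⊓ Wᗮ : Submodule ℝ E))) := by
    ext r
    constructor
    · rintro ⟨u, v, hu, hv, hu1, hv1, rfl⟩
      exact ⟨(u, v), ⟨⟨mem_closedBall_zero_iff.2 hu1, hu⟩,
        ⟨mem_closedBall_zero_iff.2 hv1, hv⟩⟩, rfl⟩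
    · rintro ⟨⟨u, v⟩, ⟨⟨hu1, hu⟩, ⟨hv1, hv⟩⟩, rfl⟩
      exact ⟨u, v, hu, hv, mem_closedBall_zero_iff.1 hu1, mem_closedBall_zero_iff.1 hv1, rfl⟩
  have hScpt : IsCompact S := by
    rw [himg]
    exact hK.image continuous_inner
  have hc1 : sSup S < 1 := by
    have hmem : sSup S ∈ S := hScpt.sSup_mem hSne
    obtain ⟨u, v, hu, hv, hu1, hv1, hceq⟩ := hmem
    rw [hceq]
    by_contra hcon
    push_neg at hcon
    have hcs : ⟪u, v⟫ ≤ ‖u‖ * ‖v‖ := real_inner_le_norm u v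
    have hnu : ‖u‖ = 1 := by nlinarith [norm_nonneg u, norm_nonneg v]
    have hnv : ‖v‖ = 1 := by nlinarith [norm_nonneg u, norm_nonneg v]
    have heq : ⟪u, v⟫ = ‖u‖ * ‖v‖ := le_antisymm hcs (by rw [hnu, hnv]; linarith)
    have huveq : ‖v‖ • u = ‖u‖ • v := inner_eq_norm_mul_iff_real.1 heq
    rw [hnu, hnv, one_smul, one_smul] at huveq
    subst huveq
    obtain ⟨huDu, huW⟩ := Submodule.mem_inf.1 hu
    obtain ⟨huDv, _⟩ := Submodule.mem_inf.1 hv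
    have huWmem : u ∈ W := Submodule.mem_inf.2 ⟨huDu, huDv⟩
    have : ⟪u, u⟫ = 0 := (Submodule.mem_orthogonal W u).1 huW u huWmem
    rw [real_inner_self_eq_norm_sq, hnu] at this
    norm_num at this
  have h1c : 0 < 1 - sSup S ^ 2 := by nlinarith
  rw [hcF]
  have hpos : (0 : ℝ) < 4 / (1 - sSup S ^ 2) := by positivity
  have hpart1 : 1 < Real.sqrt (1 + 4 / (1 - sSup S ^ 2)) := by
    rw [show (1 : ℝ) = Real.sqrt 1 by simp]
    apply Real.sqrt_lt_sqrt (by norm_num)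
    rw [Real.sqrt_one]
    linarith
  refine ⟨hpart1, fun x => ?_⟩
  set y := x - z with hy
  set a := ((Submodule.orthogonalProjectionOnto Du y : E)) with ha
  set b := ((Submodule.orthogonalProjectionOnto Dv y : E)) with hb
  set wa := ((Submodule.orthogonalProjectionOnto W a : E)) with hwa
  set wb := ((Submodule.orthogonalProjectionOnto W b : E)) with hwb
  set u' := a - wa with hu'
  set v' := b - wb with hv'
  have haDu : a ∈ Du := (Submodule.orthogonalProjectionOnto Du y).2
  have hbDv : b ∈ Dv := (Submodule.orthogonalProjectionOnto Dv y).2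
  have hwaW : wa ∈ W := (Submodule.orthogonalProjectionOnto W a).2
  have hwbW : wb ∈ W := (Submodule.orthogonalProjectionOnto W b).2
  have hu'Du : u' ∈ Du := Submodule.sub_mem _ haDu (Submodule.mem_inf.1 hwaW).1
  have hv'Dv : v' ∈ Dv := Submodule.sub_mem _ hbDv (Submodule.mem_inf.1 hwbW).2
  have hu'W : u' ∈ Wᗮ := Submodule.sub_starProjection_mem_orthogonal a
  have hv'W : v' ∈ Wᗮ := Submodule.sub_starProjection_mem_orthogonal b
  set d := max (Metric.infDist x (U : Set E)) (Metric.infDist x (V : Set E)) with hd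
  have hd0 : 0 ≤ d := le_trans Metric.infDist_nonneg (le_max_left _ _)
  -- distance to U bounds ‖y - a‖
  have hdU : ‖y - a‖ ≤ Metric.infDist x (U : Set E) := by
    apply le_infDist_aux hU
    intro p hp
    have hm : p -ᵥ z ∈ Du := AffineSubspace.vsub_mem_direction hp hzU
    have := proj_min Du y (p - z) hm
    rw [dist_eq_norm]
    have hrw : y - (p - z) = x - p := by rw [hy]; abel
    rwa [hrw] at this
  have hdV : ‖y - b‖ ≤ Metric.infDist x (V : Set E) := by
    apply le_infDist_aux hV
    intro p hp
    have hm : p -ᵥ z ∈ Dv := AffineSubspace.vsub_mem_direction hp hzV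
    have := proj_min Dv y (p - z) hm
    rw [dist_eq_norm]
    have hrw : y - (p - z) = x - p := by rw [hy]; abel
    rwa [hrw] at this
  have hdU' : ‖y - a‖ ≤ d := hdU.trans (le_max_left _ _)
  have hdV' : ‖y - b‖ ≤ d := hdV.trans (le_max_right _ _)
  -- ‖u' - v'‖ ≤ ‖a - b‖ ≤ 2d
  have hab : ‖a - b‖ ≤ 2 * d := by
    have : a - b = (y - b) - (y - a) := by abel
    rw [this]
    calc ‖(y - b) - (y - a)‖ ≤ ‖y - b‖ + ‖y - a‖ := norm_sub_le _ _
      _ ≤ 2 * d := by linarith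
  have huv2d : ‖u' - v'‖ ≤ 2 * d := by
    have hproj : ((Submodule.orthogonalProjectionOnto W (a - b) : E)) = wa - wb := by
      rw [map_sub]; rfl
    have heq2 : u' - v' = (a - b) - ((Submodule.orthogonalProjectionOnto W (a - b) : E)) := by
      rw [hproj, hu', hv']; abel
    have := proj_min W (a - b) 0 (Submodule.zero_mem W)
    rw [sub_zero] at this
    rw [heq2]
    exact this.trans hab
  -- angle inequality
  have hangle : ⟪u', v'⟫ ≤ sSup S * (‖u'‖ * ‖v'‖) := by
    rcases eq_or_ne u' 0 with h0 | hu0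
    · simp [h0]
    rcases eq_or_ne v' 0 with h0 | hv0
    · simp [h0]
    have hnu : 0 < ‖u'‖ := norm_pos_iff.2 hu0
    have hnv : 0 < ‖v'‖ := norm_pos_iff.2 hv0
    have hmem : ‖u'‖⁻¹ * ‖v'‖⁻¹ * ⟪u', v'⟫ ∈ S := by
      refine ⟨‖u'‖⁻¹ • u', ‖v'‖⁻¹ • v', ?_, ?_, ?_, ?_, ?_⟩
      · exact Submodule.smul_mem _ _ (Submodule.mem_inf.2 ⟨hu'Du, hu'W⟩)
      · exact Submodule.smul_mem _ _ (Submodule.mem_inf.2 ⟨hv'Dv, hv'W⟩)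
      · rw [norm_smul, norm_inv, norm_norm, inv_mul_cancel₀ hnu.ne']
      · rw [norm_smul, norm_inv, norm_norm, inv_mul_cancel₀ hnv.ne']
      · rw [real_inner_smul_left, real_inner_smul_right]; ring
    have hle := le_csSup hSbdd hmem
    calc ⟪u', v'⟫ = (‖u'‖ * ‖v'‖) * (‖u'‖⁻¹ * ‖v'‖⁻¹ * ⟪u', v'⟫) := by
          field_simp
      _ ≤ (‖u'‖ * ‖v'‖) * sSup S := by
          apply mul_le_mul_of_nonneg_left hle (by positivity)
      _ = sSup S * (‖u'‖ * ‖v'‖) := by ring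
  -- bound on ‖u'‖²
  have hu'sq : ‖u'‖ ^ 2 ≤ 4 / (1 - sSup S ^ 2) * d ^ 2 := by
    have hexp : ‖u' - v'‖ ^ 2 = ‖u'‖ ^ 2 - 2 * ⟪u', v'⟫ + ‖v'‖ ^ 2 := norm_sub_sq_real u' v'
    have hsq : (1 - sSup S ^ 2) * ‖u'‖ ^ 2 ≤ ‖u' - v'‖ ^ 2 := by
      nlinarith [sq_nonneg (sSup S * ‖u'‖ - ‖v'‖)]
    have h4d : ‖u' - v'‖ ^ 2 ≤ 4 * d ^ 2 := by
      nlinarith [norm_nonneg (u' - v')]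
    rw [div_mul_eq_mul_div, le_div_iff₀ h1c]
    calc ‖u'‖ ^ 2 * (1 - sSup S ^ 2) = (1 - sSup S ^ 2) * ‖u'‖ ^ 2 := by ring
      _ ≤ ‖u' - v'‖ ^ 2 := hsq
      _ ≤ 4 * d ^ 2 := h4d
  -- p := z + wa ∈ U ⊓ V
  have hpU : z + wa ∈ U := by
    have := AffineSubspace.vadd_mem_of_mem_direction (Submodule.mem_inf.1 hwaW).1 hzU
    simpa [add_comm] using this
  have hpV : z + wa ∈ V := by
    have := AffineSubspace.vadd_mem_of_mem_direction (Submodule.mem_inf.1 hwaW).2 hzV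
    simpa [add_comm] using this
  have hle : Metric.infDist x ((U ⊓ V : AffineSubspace ℝ E) : Set E) ≤ ‖x - (z + wa)‖ := by
    rw [← dist_eq_norm]
    exact Metric.infDist_le_dist_of_mem
      (by rw [SetLike.mem_coe, AffineSubspace.mem_inf_iff]; exact ⟨hpU, hpV⟩)
  have hxw : x - (z + wa) = (y - a) + u' := by rw [hy, hu']; abel
  have horth : ⟪y - a, u'⟫ = 0 := by
    have h1 : y - a ∈ Duᗮ := Submodule.sub_starProjection_mem_orthogonal y
    have := (Submodule.mem_orthogonal Du (y - a)).1 h1 u' hu'Du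
    rwa [real_inner_comm] at this
  have hfinal : ‖x - (z + wa)‖ ^ 2 ≤ (1 + 4 / (1 - sSup S ^ 2)) * d ^ 2 := by
    rw [hxw, norm_add_sq_real, horth]
    have hya : ‖y - a‖ ^ 2 ≤ d ^ 2 := pow_le_pow_left₀ (norm_nonneg _) hdU' 2
    ring_nf
    ring_nf at hu'sq
    linarith [hya, hu'sq]
  calc Metric.infDist x ((U ⊓ V : AffineSubspace ℝ E) : Set E) ≤ ‖x - (z + wa)‖ := hle
    _ = Real.sqrt (‖x - (z + wa)‖ ^ 2) := (Real.sqrt_sq (norm_nonneg _)).symm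
    _ ≤ Real.sqrt ((1 + 4 / (1 - sSup S ^ 2)) * d ^ 2) := Real.sqrt_le_sqrt hfinal
    _ = Real.sqrt (1 + 4 / (1 - sSup S ^ 2)) * d := by
        rw [Real.sqrt_mul (by linarith), Real.sqrt_sq hd0]
end

section
/- Let U₁, …, U_m be nonempty affine subspaces of E with nonempty intersection S = ⋂ᵢ Uᵢ, let x ∈ E, and let W_x be the affine span of {x, R_{U₁}(x), …, R_{U_m}(x)}. Then for every w ∈ W_x, P_S(w) = P_S(x). -/
/-- Orthogonal projection onto a nonempty affine subspace of a
finite-dimensional real inner product space, as a map `E → E`. -/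
noncomputable def projA {E : Type*} [NormedAddCommGroup E] [InnerProductSpace ℝ E]
    [FiniteDimensional ℝ E] (s : AffineSubspace ℝ E) (hs : (s : Set E).Nonempty) (x : E) : E :=
  haveI : Nonempty s := hs.to_subtype
  EuclideanGeometry.orthogonalProjection s x

/-- Reflection across a nonempty affine subspace: `R_s(x) = 2 P_s(x) - x`. -/
noncomputable def reflA {E : Type*} [NormedAddCommGroup E] [InnerProductSpace ℝ E]
    [FiniteDimensional ℝ E] (s : AffineSubspace ℝ E) (hs : (s : Set E).Nonempty) (x : E) : E :=
  (2 : ℝ) • projA s hs x - x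

/-- `W_x`: the affine span of `x` together with its reflections across `U₁, …, U_m`. -/
noncomputable def Wx {E : Type*} [NormedAddCommGroup E] [InnerProductSpace ℝ E]
    [FiniteDimensional ℝ E] {m : ℕ} (U : Fin m → AffineSubspace ℝ E)
    (hU : ∀ i, ((U i : Set E)).Nonempty) (x : E) : AffineSubspace ℝ E :=
  affineSpan ℝ (insert x (Set.range fun i => reflA (U i) (hU i) x))

/-- `W_x` is nonempty (it contains `x`). -/
theorem Wx_nonempty {E : Type*} [NormedAddCommGroup E] [InnerProductSpace ℝ E]
    [FiniteDimensional ℝ E] {m : ℕ} (U : Fin m → AffineSubspace ℝ E)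
    (hU : ∀ i, ((U i : Set E)).Nonempty) (x : E) : ((Wx U hU x : Set E)).Nonempty :=
  ⟨x, subset_affineSpan ℝ _ (Set.mem_insert _ _)⟩

theorem projection_invariant_on_Wx
    {E : Type*} [NormedAddCommGroup E] [InnerProductSpace ℝ E] [FiniteDimensional ℝ E]
    {m : ℕ} (U : Fin m → AffineSubspace ℝ E) (hU : ∀ i, ((U i : Set E)).Nonempty)
    (hS : ((⨅ i, U i : AffineSubspace ℝ E) : Set E).Nonempty) (x : E) :
    ∀ w ∈ Wx U hU x, projA (⨅ i, U i) hS w = projA (⨅ i, U i) hS x := by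
  intro w hw
  set S : AffineSubspace ℝ E := ⨅ i, U i with hSdef
  haveI : Nonempty S := hS.to_subtype
  set p : E := projA S hS x with hp
  have hpx : p = (EuclideanGeometry.orthogonalProjection S x : E) := rfl
  have hpS : p ∈ S := by
    rw [hpx]; exact EuclideanGeometry.orthogonalProjection_mem x
  have hxp : x -ᵥ p ∈ S.directionᗮ := by
    rw [hpx]
    exact EuclideanGeometry.vsub_orthogonalProjection_mem_direction_orthogonal S x
  have hW : Wx U hU x ≤ AffineSubspace.mk' p S.directionᗮ := by
    rw [Wx, affineSpan_le]
    rintro y (rfl | ⟨i, rfl⟩)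
    · rw [AffineSubspace.mem_coe, AffineSubspace.mem_mk']
      exact hxp
    · rw [AffineSubspace.mem_coe, AffineSubspace.mem_mk']
      haveI : Nonempty (U i) := (hU i).to_subtype
      have h1 : x -ᵥ projA (U i) (hU i) x ∈ (U i).directionᗮ :=
        EuclideanGeometry.vsub_orthogonalProjection_mem_direction_orthogonal (U i) x
      have hdir : S.direction ≤ (U i).direction :=
        AffineSubspace.direction_le (iInf_le U i)
      have h1' : x -ᵥ projA (U i) (hU i) x ∈ S.directionᗮ :=
        Submodule.orthogonal_le hdir h1
      have heq : reflA (U i) (hU i) x -ᵥ p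
          = (x -ᵥ p) - (2 : ℝ) • (x -ᵥ projA (U i) (hU i) x) := by
        simp only [reflA, vsub_eq_sub]
        module
      rw [heq]
      exact Submodule.sub_mem _ hxp (Submodule.smul_mem _ _ h1')
  have hw' : w -ᵥ p ∈ S.directionᗮ := by
    have := hW hw
    rwa [AffineSubspace.mem_mk'] at this
  have hmem : p ∈ (S : Set E) ∩ AffineSubspace.mk' w S.directionᗮ := by
    refine ⟨hpS, ?_⟩
    rw [AffineSubspace.mem_coe, AffineSubspace.mem_mk']
    have : p -ᵥ w = -(w -ᵥ p) := by simp
    rw [this]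
    exact Submodule.neg_mem _ hw'
  rw [EuclideanGeometry.inter_eq_singleton_orthogonalProjection w] at hmem
  exact hmem.symm
end

section
/- Let U₁, …, U_m be nonempty affine subspaces of E with nonempty intersection S = ⋂ᵢ Uᵢ, let p₀ ≥ 0 and p₁, …, p_m > 0 with p₀ + p₁ + … + p_m = 1, and define the F-SPM operator T(x) = p₀·x + Σᵢ₌₁ᵐ pᵢ·P_{Uᵢ}(x). Then for every x ∈ E and every k ≥ 0, P_S(T^k(x)) = P_S(x), where T^k denotes the k-fold composition of T. -/
lemma projA_vadd_eq {E : Type*} [NormedAddCommGroup E] [InnerProductSpace ℝ E]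
    [FiniteDimensional ℝ E] (s : AffineSubspace ℝ E) (hs : (s : Set E).Nonempty)
    {v : E} (hv : v ∈ s.directionᗮ) (x : E) :
    projA s hs (v + x) = projA s hs x := by
  haveI : Nonempty s := hs.to_subtype
  unfold projA
  have h1 : (↑(EuclideanGeometry.orthogonalProjection s x) : E) ∈
      (s : Set E) ∩ AffineSubspace.mk' (v +ᵥ x) s.directionᗮ := by
    constructor
    · exact EuclideanGeometry.orthogonalProjection_mem x
    · refine AffineSubspace.vsub_right_mem_direction_iff_mem
        (AffineSubspace.self_mem_mk' _ _) _ |>.mp ?_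
      rw [AffineSubspace.direction_mk']
      have h2 := EuclideanGeometry.orthogonalProjection_vsub_mem_direction_orthogonal s x
      have : (↑(EuclideanGeometry.orthogonalProjection s x) : E) -ᵥ (v +ᵥ x)
          = ((↑(EuclideanGeometry.orthogonalProjection s x) : E) -ᵥ x) - v := by
        simp [vsub_eq_sub, vadd_eq_add]; abel
      rw [this]
      exact Submodule.sub_mem _ h2 hv
  rw [EuclideanGeometry.inter_eq_singleton_orthogonalProjection (v +ᵥ x)] at h1
  simpa [vadd_eq_add] using h1.symm

theorem fspm_iterates_projection_invariant
    {E : Type*} [NormedAddCommGroup E] [InnerProductSpace ℝ E] [FiniteDimensional ℝ E]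
    {m : ℕ} (U : Fin m → AffineSubspace ℝ E) (hU : ∀ i, ((U i : Set E)).Nonempty)
    (hS : ((⨅ i, U i : AffineSubspace ℝ E) : Set E).Nonempty)
    (p₀ : ℝ) (p : Fin m → ℝ) (hp₀ : 0 ≤ p₀) (hp : ∀ i, 0 < p i)
    (hsum : p₀ + ∑ i, p i = 1) (x : E) (k : ℕ) :
    projA (⨅ i, U i) hS
        ((fun y => p₀ • y + ∑ i, p i • projA (U i) (hU i) y)^[k] x) =
      projA (⨅ i, U i) hS x := by
  induction k with
  | zero => simp
  | succ n ih =>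
    rw [Function.iterate_succ_apply']
    set y := (fun y => p₀ • y + ∑ i, p i • projA (U i) (hU i) y)^[n] x with hy
    have key : p₀ • y + ∑ i, p i • projA (U i) (hU i) y
        = (∑ i, p i • (projA (U i) (hU i) y - y)) + y := by
      have : (∑ i, p i • (projA (U i) (hU i) y - y))
          = (∑ i, p i • projA (U i) (hU i) y) - (∑ i, p i) • y := by
        simp only [smul_sub, Finset.sum_sub_distrib, Finset.sum_smul]
      rw [this]
      have hps : (∑ i, p i) = 1 - p₀ := by linarith
      rw [hps]
      module
    rw [key]
    have hmem : (∑ i, p i • (projA (U i) (hU i) y - y)) ∈ (⨅ i, U i : AffineSubspace ℝ E).directionᗮ := by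
      apply Submodule.sum_mem
      intro i _
      apply Submodule.smul_mem
      have h1 : projA (U i) (hU i) y - y ∈ (U i).directionᗮ := by
        haveI : Nonempty (U i) := (hU i).to_subtype
        simpa [projA, vsub_eq_sub] using
          EuclideanGeometry.orthogonalProjection_vsub_mem_direction_orthogonal (U i) y
      have hle : (⨅ i, U i : AffineSubspace ℝ E).direction ≤ (U i).direction :=
        AffineSubspace.direction_le (iInf_le _ _)
      exact Submodule.orthogonal_le hle h1
    rw [projA_vadd_eq _ _ hmem, ih]
end

section
/- Let U₁, …, U_m be nonempty affine subspaces of E with nonempty intersection S = ⋂ᵢ Uᵢ, let p₀ ≥ 0 and p₁, …, p_m > 0 with p₀ + p₁ + … + p_m = 1, and define the F-SPM operator T(x) = p₀·x + Σᵢ₌₁ᵐ pᵢ·P_{Uᵢ}(x). Then there exists a constant r < 1 such that for every x ∈ E, ‖T(x) − P_S(x)‖ ≤ r·‖x − P_S(x)‖; consequently, for every x ∈ E and every k ≥ 0, ‖T^k(x) − P_S(x)‖ ≤ r^k·‖x − P_S(x)‖, so the F-SPM iterates converge linearly to P_S(x). -/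
open RealInnerProductSpace


theorem projA_eq {E : Type*} [NormedAddCommGroup E] [InnerProductSpace ℝ E]
    [FiniteDimensional ℝ E] (s : AffineSubspace ℝ E) (hs : (s : Set E).Nonempty)
    (x y : E) (hy : y ∈ s) (hxy : x - y ∈ s.directionᗮ) : projA s hs x = y := by
  haveI : Nonempty s := hs.to_subtype
  have hz : (projA s hs x) ∈ s := EuclideanGeometry.orthogonalProjection_mem x
  have hxz : x - projA s hs x ∈ s.directionᗮ := by
    exact EuclideanGeometry.vsub_orthogonalProjection_mem_direction_orthogonal s x
  have h1 : projA s hs x - y ∈ s.direction := by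
    simpa using AffineSubspace.vsub_mem_direction hz hy
  have h2 : projA s hs x - y ∈ s.directionᗮ := by
    have h3 := Submodule.sub_mem _ hxy hxz
    simpa [sub_sub_sub_cancel_left] using h3
  have h4 : projA s hs x - y = 0 := by
    have h5 := (Submodule.mem_orthogonal _ _).1 h2 _ h1
    rwa [inner_self_eq_zero] at h5
  exact sub_eq_zero.1 h4

theorem orthogonalProjection_inner_eq_zero {E : Type*} [NormedAddCommGroup E]
    [InnerProductSpace ℝ E] {K : Submodule ℝ E} [K.HasOrthogonalProjection] (v w : E)
    (hw : w ∈ K) : ⟪v - (K.orthogonalProjectionOnto v : E), w⟫ = 0 :=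
  Submodule.starProjection_inner_eq_zero v w hw

theorem orthogonalProjection_eq_self_iff {E : Type*} [NormedAddCommGroup E]
    [InnerProductSpace ℝ E] {K : Submodule ℝ E} [K.HasOrthogonalProjection] {v : E} :
    (K.orthogonalProjectionOnto v : E) = v ↔ v ∈ K :=
  Submodule.starProjection_eq_self_iff

theorem sub_orthogonalProjection_mem_orthogonal {E : Type*} [NormedAddCommGroup E]
    [InnerProductSpace ℝ E] {K : Submodule ℝ E} [K.HasOrthogonalProjection] (v : E) :
    v - (K.orthogonalProjectionOnto v : E) ∈ Kᗮ :=
  Submodule.sub_starProjection_mem_orthogonal v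

theorem pythProj {E : Type*} [NormedAddCommGroup E] [InnerProductSpace ℝ E]
    [FiniteDimensional ℝ E] (K : Submodule ℝ E) (v : E) :
    ‖((Submodule.orthogonalProjectionOnto K v) : E)‖^2 + ‖v - Submodule.orthogonalProjectionOnto K v‖^2 = ‖v‖^2 := by
  have h := orthogonalProjection_inner_eq_zero v ((Submodule.orthogonalProjectionOnto K v) : E)
    (Submodule.orthogonalProjectionOnto K v).2
  rw [real_inner_comm] at h
  have h2 : v = ↑(Submodule.orthogonalProjectionOnto K v) + (v - Submodule.orthogonalProjectionOnto K v) := by abel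
  conv_rhs => rw [h2]
  rw [norm_add_sq_real, h]; ring

theorem fspm_le_of_sq_le_sq {a b : ℝ} (hb : 0 ≤ b) (h : a^2 ≤ b^2) : a ≤ b := by nlinarith

theorem fspm_lt_of_sq_lt_sq {a b : ℝ} (hb : 0 ≤ b) (h : a^2 < b^2) : a < b := by nlinarith

theorem mem_iInf_affine {E : Type*} [NormedAddCommGroup E] [InnerProductSpace ℝ E]
    {m : ℕ} (U : Fin m → AffineSubspace ℝ E) (x : E)
    (h : ∀ i, x ∈ U i) : x ∈ ⨅ i, U i := by
  have h2 : affineSpan ℝ {x} ≤ ⨅ i, U i :=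
    le_iInf fun i => affineSpan_le.2 (Set.singleton_subset_iff.2 (h i))
  exact h2 (mem_affineSpan ℝ (Set.mem_singleton x))

theorem fspm_linear_convergence
    {E : Type*} [NormedAddCommGroup E] [InnerProductSpace ℝ E] [FiniteDimensional ℝ E]
    {m : ℕ} (U : Fin m → AffineSubspace ℝ E) (hU : ∀ i, ((U i : Set E)).Nonempty)
    (hS : ((⨅ i, U i : AffineSubspace ℝ E) : Set E).Nonempty)
    (p₀ : ℝ) (p : Fin m → ℝ) (hp₀ : 0 ≤ p₀) (hp : ∀ i, 0 < p i)
    (hsum : p₀ + ∑ i, p i = 1) :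
    ∃ r : ℝ, r < 1 ∧
      (∀ x : E,
        ‖(p₀ • x + ∑ i, p i • projA (U i) (hU i) x) - projA (⨅ i, U i) hS x‖ ≤
          r * ‖x - projA (⨅ i, U i) hS x‖) ∧
      (∀ x : E, ∀ k : ℕ,
        ‖(fun y => p₀ • y + ∑ i, p i • projA (U i) (hU i) y)^[k] x -
            projA (⨅ i, U i) hS x‖ ≤
          r ^ k * ‖x - projA (⨅ i, U i) hS x‖) := by
  obtain ⟨s₀, hs₀⟩ := id hS
  have hs₀U : ∀ i, s₀ ∈ U i := fun i => iInf_le U i hs₀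
  set W : Submodule ℝ E := (⨅ i, U i : AffineSubspace ℝ E).direction with hWdef
  have hWle : ∀ i, W ≤ (U i).direction := fun i => AffineSubspace.direction_le (iInf_le U i)
  -- the linear operator
  set A : E →L[ℝ] E := p₀ • ContinuousLinearMap.id ℝ E +
    ∑ i, p i • (((U i).direction).subtypeL.comp (Submodule.orthogonalProjectionOnto ((U i).direction)))
    with hAdef
  have hAapp : ∀ v : E, A v = p₀ • v + ∑ i, p i • (Submodule.orthogonalProjectionOnto ((U i).direction) v : E) := by
    intro v
    simp [hAdef, ContinuousLinearMap.sum_apply]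
  have hAfix : ∀ w ∈ W, A w = w := by
    intro w hw
    rw [hAapp]
    have h1 : ∀ i, (Submodule.orthogonalProjectionOnto ((U i).direction) w : E) = w := fun i =>
      orthogonalProjection_eq_self_iff.2 (hWle i hw)
    simp only [h1]
    rw [← Finset.sum_smul, ← add_smul, hsum, one_smul]
  have hAmem : ∀ u ∈ Wᗮ, A u ∈ Wᗮ := by
    intro u hu
    rw [Submodule.mem_orthogonal]
    intro w hw
    have hwi : ∀ i, ⟪w, (Submodule.orthogonalProjectionOnto ((U i).direction) u : E)⟫ = ⟪w, u⟫ := by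
      intro i
      have h0 := orthogonalProjection_inner_eq_zero u w (hWle i hw)
      rw [inner_sub_left] at h0
      have h1 : ⟪(Submodule.orthogonalProjectionOnto ((U i).direction) u : E), w⟫ = ⟪u, w⟫ := by linarith
      rw [real_inner_comm, h1, real_inner_comm]
    rw [hAapp, inner_add_right, inner_smul_right, inner_sum]
    simp only [inner_smul_right, hwi]
    have h2 : ⟪w, u⟫ = 0 := (Submodule.mem_orthogonal _ _).1 hu w hw
    rw [h2]
    simp
  have hlt : ∀ u ∈ Wᗮ, u ≠ 0 → ‖A u‖ < ‖u‖ := by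
    intro u hu hne
    have hex : ∃ i, (Submodule.orthogonalProjectionOnto ((U i).direction) u : E) ≠ u := by
      by_contra h
      push_neg at h
      have hmem : ∀ i, u ∈ (U i).direction := fun i => by
        rw [← h i]; exact (Submodule.orthogonalProjectionOnto _ u).2
      have hin : u + s₀ ∈ (⨅ i, U i : AffineSubspace ℝ E) := by
        apply mem_iInf_affine
        intro i
        exact AffineSubspace.vadd_mem_of_mem_direction (hmem i) (hs₀U i)
      have hW : u ∈ W := by
        have h4 := AffineSubspace.vsub_mem_direction hin hs₀
        simpa using h4
      have h5 := (Submodule.mem_orthogonal _ _).1 hu _ hW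
      rw [inner_self_eq_zero] at h5
      exact hne h5
    obtain ⟨i₀, hi₀⟩ := hex
    have hle : ∀ i, ‖(Submodule.orthogonalProjectionOnto ((U i).direction) u : E)‖ ≤ ‖u‖ := by
      intro i
      have h6 := pythProj ((U i).direction) u
      refine fspm_le_of_sq_le_sq (norm_nonneg _) ?_
      nlinarith [sq_nonneg ‖u - Submodule.orthogonalProjectionOnto ((U i).direction) u‖]
    have hlt0 : ‖(Submodule.orthogonalProjectionOnto ((U i₀).direction) u : E)‖ < ‖u‖ := by
      have h6 := pythProj ((U i₀).direction) u
      have h7 : u - (Submodule.orthogonalProjectionOnto ((U i₀).direction) u : E) ≠ 0 :=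
        sub_ne_zero.2 (Ne.symm hi₀)
      have h8 : 0 < ‖u - (Submodule.orthogonalProjectionOnto ((U i₀).direction) u : E)‖ :=
        norm_pos_iff.2 h7
      refine fspm_lt_of_sq_lt_sq (norm_nonneg _) ?_
      nlinarith
    calc ‖A u‖ ≤ p₀ * ‖u‖ + ∑ i, p i * ‖(Submodule.orthogonalProjectionOnto ((U i).direction) u : E)‖ := by
          rw [hAapp]
          refine (norm_add_le _ _).trans ?_
          gcongr
          · rw [norm_smul, Real.norm_eq_abs, abs_of_nonneg hp₀]
          · refine (norm_sum_le _ _).trans ?_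
            refine Finset.sum_le_sum fun i _ => ?_
            rw [norm_smul, Real.norm_eq_abs, abs_of_nonneg (hp i).le]
      _ < p₀ * ‖u‖ + ∑ i, p i * ‖u‖ := by
          have h9 : ∑ i, p i * ‖(Submodule.orthogonalProjectionOnto ((U i).direction) u : E)‖ <
              ∑ i, p i * ‖u‖ := by
            refine Finset.sum_lt_sum (fun i _ => by nlinarith [hle i, (hp i).le]) ?_
            exact ⟨i₀, Finset.mem_univ _, by nlinarith [hp i₀]⟩
          linarith
      _ = ‖u‖ := by rw [← Finset.sum_mul, ← add_mul, hsum, one_mul]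
  -- choose the contraction constant
  obtain ⟨r, hr1, hr0, hr⟩ : ∃ r : ℝ, r < 1 ∧ 0 ≤ r ∧ ∀ u ∈ Wᗮ, ‖A u‖ ≤ r * ‖u‖ := by
    by_cases hne : (Metric.sphere (0:E) 1 ∩ (Wᗮ : Set E)).Nonempty
    · obtain ⟨u₀, hu₀, hmax⟩ := ((isCompact_sphere (0:E) 1).inter_right
        (Submodule.closed_of_finiteDimensional (Wᗮ))).exists_isMaxOn hne
        ((A.continuous.norm).continuousOn)
      have hu₀n : ‖u₀‖ = 1 := by simpa using hu₀.1
      have hu₀ne : u₀ ≠ 0 := by intro h; rw [h] at hu₀n; simp at hu₀n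
      have hAr : ‖A u₀‖ < 1 := by
        have := hlt u₀ hu₀.2 hu₀ne
        rwa [hu₀n] at this
      refine ⟨‖A u₀‖, hAr, norm_nonneg _, ?_⟩
      intro u hu
      rcases eq_or_ne u 0 with h | h
      · simp [h]
      · have hn : (0:ℝ) < ‖u‖ := norm_pos_iff.2 h
        have hmem : ‖u‖⁻¹ • u ∈ Metric.sphere (0:E) 1 ∩ (Wᗮ : Set E) := by
          constructor
          · simp [norm_smul, abs_of_nonneg (inv_nonneg.2 hn.le), inv_mul_cancel₀ hn.ne']
          · exact Submodule.smul_mem _ _ hu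
        have h2 := isMaxOn_iff.1 hmax _ hmem
        simp only [map_smul, norm_smul, Real.norm_eq_abs, abs_inv, abs_norm] at h2
        calc ‖A u‖ = ‖u‖ * (‖u‖⁻¹ * ‖A u‖) := by field_simp
          _ ≤ ‖u‖ * ‖A u₀‖ := by
              refine mul_le_mul_of_nonneg_left ?_ hn.le
              exact h2
          _ = ‖A u₀‖ * ‖u‖ := mul_comm _ _
    · refine ⟨0, one_pos, le_refl 0, ?_⟩
      intro u hu
      rcases eq_or_ne u 0 with h | h
      · simp [h]
      · exfalso
        have hn : (0:ℝ) < ‖u‖ := norm_pos_iff.2 h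
        exact hne ⟨‖u‖⁻¹ • u,
          by simp [norm_smul, abs_of_nonneg (inv_nonneg.2 hn.le), inv_mul_cancel₀ hn.ne'],
          Submodule.smul_mem _ _ hu⟩
  -- iterate bounds
  have hiter : ∀ k : ℕ, ∀ u ∈ Wᗮ, (⇑A)^[k] u ∈ Wᗮ ∧ ‖(⇑A)^[k] u‖ ≤ r ^ k * ‖u‖ := by
    intro k
    induction k with
    | zero => intro u hu; refine ⟨hu, ?_⟩; simp
    | succ n ih =>
      intro u hu
      obtain ⟨h1, h2⟩ := ih u hu
      rw [Function.iterate_succ_apply']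
      refine ⟨hAmem _ h1, ?_⟩
      calc ‖A ((⇑A)^[n] u)‖ ≤ r * ‖(⇑A)^[n] u‖ := hr _ h1
        _ ≤ r * (r ^ n * ‖u‖) := mul_le_mul_of_nonneg_left h2 hr0
        _ = r ^ (n+1) * ‖u‖ := by ring
  have hiterfix : ∀ k : ℕ, ∀ w ∈ W, (⇑A)^[k] w = w := by
    intro k
    induction k with
    | zero => intro w _; simp
    | succ n ih =>
      intro w hw
      rw [Function.iterate_succ_apply', ih w hw, hAfix w hw]
  -- projection formulas
  have hprojU : ∀ i (x : E), projA (U i) (hU i) x =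
      (Submodule.orthogonalProjectionOnto ((U i).direction) (x - s₀) : E) + s₀ := by
    intro i x
    apply projA_eq
    · have h1 := AffineSubspace.vadd_mem_of_mem_direction
        (Submodule.orthogonalProjectionOnto ((U i).direction) (x - s₀)).2 (hs₀U i)
      simpa using h1
    · have h2 := sub_orthogonalProjection_mem_orthogonal (K := (U i).direction) (x - s₀)
      have h3 : x - ((Submodule.orthogonalProjectionOnto ((U i).direction) (x - s₀) : E) + s₀) =
          (x - s₀) - (Submodule.orthogonalProjectionOnto ((U i).direction) (x - s₀) : E) := by abel
      rwa [h3]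
  have hprojS : ∀ x : E, projA (⨅ i, U i) hS x =
      (Submodule.orthogonalProjectionOnto W (x - s₀) : E) + s₀ := by
    intro x
    apply projA_eq
    · have h1 := AffineSubspace.vadd_mem_of_mem_direction
        (Submodule.orthogonalProjectionOnto W (x - s₀)).2 hs₀
      simpa using h1
    · have h2 := sub_orthogonalProjection_mem_orthogonal (K := W) (x - s₀)
      have h3 : x - ((Submodule.orthogonalProjectionOnto W (x - s₀) : E) + s₀) =
          (x - s₀) - (Submodule.orthogonalProjectionOnto W (x - s₀) : E) := by abel
      rwa [h3]
  -- the F-SPM operator in terms of A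
  have hT : ∀ y : E, (p₀ • y + ∑ i, p i • projA (U i) (hU i) y) = A (y - s₀) + s₀ := by
    intro y
    have hs : p₀ • s₀ + (∑ i, p i) • s₀ = s₀ := by rw [← add_smul, hsum, one_smul]
    simp only [hprojU, smul_add]
    calc p₀ • y + ∑ i, (p i • (Submodule.orthogonalProjectionOnto ((U i).direction) (y - s₀) : E) + p i • s₀)
        = (p₀ • (y - s₀) + ∑ i, p i • (Submodule.orthogonalProjectionOnto ((U i).direction) (y - s₀) : E)) +
          (p₀ • s₀ + (∑ i, p i) • s₀) := by
          rw [Finset.sum_add_distrib, ← Finset.sum_smul, smul_sub]; abel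
      _ = A (y - s₀) + s₀ := by rw [hs, hAapp]
  have hTiter : ∀ (x : E) (k : ℕ),
      (fun y => p₀ • y + ∑ i, p i • projA (U i) (hU i) y)^[k] x = (⇑A)^[k] (x - s₀) + s₀ := by
    intro x k
    induction k with
    | zero => simp
    | succ n ih =>
      rw [Function.iterate_succ_apply', ih, Function.iterate_succ_apply']
      have := hT ((⇑A)^[n] (x - s₀) + s₀)
      simpa using this
  -- main estimate
  have main : ∀ (x : E) (k : ℕ),
      ‖(fun y => p₀ • y + ∑ i, p i • projA (U i) (hU i) y)^[k] x -
          projA (⨅ i, U i) hS x‖ ≤ r ^ k * ‖x - projA (⨅ i, U i) hS x‖ := by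
    intro x k
    set v := x - s₀ with hv
    set w : E := (Submodule.orthogonalProjectionOnto W v : E) with hwdef
    have hwW : w ∈ W := (Submodule.orthogonalProjectionOnto W v).2
    set u := v - w with hu
    have huW : u ∈ Wᗮ := sub_orthogonalProjection_mem_orthogonal (K := W) v
    have hxp : x - projA (⨅ i, U i) hS x = u := by
      rw [hprojS]; simp only [hu, hv]; abel
    have hvk : (⇑A)^[k] v = (⇑A)^[k] u + w := by
      have hsplit : v = u + w := by rw [hu]; abel
      rw [hsplit, ← FunLike.coe_pow_eq_iterate, map_add, FunLike.coe_pow_eq_iterate,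
        hiterfix k w hwW]
    have hTk : (fun y => p₀ • y + ∑ i, p i • projA (U i) (hU i) y)^[k] x -
        projA (⨅ i, U i) hS x = (⇑A)^[k] u := by
      rw [hTiter, hprojS, hvk]
      simp only [← hv, ← hwdef]
      abel
    rw [hTk, hxp]
    exact (hiter k u huW).2
  refine ⟨r, hr1, ?_, main⟩
  intro x
  have h := main x 1
  simpa using h
end

section
/- Let U₁, …, U_m be nonempty affine subspaces of E with nonempty intersection S = ⋂ᵢ Uᵢ, let x ∈ E, and let W_x be the affine span of {x, R_{U₁}(x), …, R_{U_m}(x)}. Then for every s ∈ S, the point P_{W_x}(s) lies in W_x and is equidistant from x and from each reflection R_{Uᵢ}(x): ‖P_{W_x}(s) − x‖ = ‖P_{W_x}(s) − R_{Uᵢ}(x)‖ for all i = 1, …, m. -/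
/-- `reflA` agrees with mathlib's `EuclideanGeometry.reflection`. -/
theorem reflA_eq_reflection {E : Type*} [NormedAddCommGroup E] [InnerProductSpace ℝ E]
    [FiniteDimensional ℝ E] (s : AffineSubspace ℝ E) (hs : (s : Set E).Nonempty) (x : E) :
    haveI : Nonempty s := hs.to_subtype
    reflA s hs x = EuclideanGeometry.reflection s x := by
  haveI : Nonempty s := hs.to_subtype
  rw [EuclideanGeometry.reflection_apply', reflA, projA]
  simp only [vsub_eq_sub, vadd_eq_add]
  module

theorem parallel_circumcenter_properties
    {E : Type*} [NormedAddCommGroup E] [InnerProductSpace ℝ E] [FiniteDimensional ℝ E]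
    {m : ℕ} (U : Fin m → AffineSubspace ℝ E) (hU : ∀ i, ((U i : Set E)).Nonempty)
    (hS : ((⨅ i, U i : AffineSubspace ℝ E) : Set E).Nonempty) (x : E) :
    ∀ s ∈ (⨅ i, U i : AffineSubspace ℝ E),
      projA (Wx U hU x) (Wx_nonempty U hU x) s ∈ Wx U hU x ∧
      ∀ i, ‖projA (Wx U hU x) (Wx_nonempty U hU x) s - x‖ =
        ‖projA (Wx U hU x) (Wx_nonempty U hU x) s - reflA (U i) (hU i) x‖ := by
  intro s hs
  haveI : Nonempty (Wx U hU x) := (Wx_nonempty U hU x).to_subtype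
  constructor
  · exact (EuclideanGeometry.orthogonalProjection (Wx U hU x) s).2
  · intro i
    haveI : Nonempty (U i) := (hU i).to_subtype
    set W := Wx U hU x
    set p : E := projA W (Wx_nonempty U hU x) s with hp
    have hpdef : p = (EuclideanGeometry.orthogonalProjection W s : E) := rfl
    have hxW : x ∈ W := subset_affineSpan ℝ _ (Set.mem_insert _ _)
    have hrW : reflA (U i) (hU i) x ∈ W :=
      subset_affineSpan ℝ _ (Set.mem_insert_of_mem _ ⟨i, rfl⟩)
    have hsU : s ∈ U i := by
      have h : (⨅ j, U j : AffineSubspace ℝ E) ≤ U i := iInf_le _ i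
      exact h hs
    have hd : dist s x = dist s (reflA (U i) (hU i) x) := by
      rw [reflA_eq_reflection, EuclideanGeometry.dist_reflection_eq_of_mem (U i) hsU]
    have h1 := EuclideanGeometry.dist_sq_eq_dist_orthogonalProjection_sq_add_dist_orthogonalProjection_sq
      (s := W) s hxW
    have h2 := EuclideanGeometry.dist_sq_eq_dist_orthogonalProjection_sq_add_dist_orthogonalProjection_sq
      (s := W) s hrW
    rw [← hpdef] at h1 h2
    rw [dist_comm x s, hd, dist_comm s (reflA (U i) (hU i) x)] at h1
    have hsq : dist p x * dist p x
        = dist p (reflA (U i) (hU i) x) * dist p (reflA (U i) (hU i) x) := by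
      rw [dist_comm p x, dist_comm p (reflA (U i) (hU i) x)]
      nlinarith [h1, h2]
    have heq : dist p x = dist p (reflA (U i) (hU i) x) := by
      nlinarith [dist_nonneg (x := p) (y := x),
        dist_nonneg (x := p) (y := reflA (U i) (hU i) x), hsq]
    simpa [dist_eq_norm] using heq
end

section
/- Let U₁, …, U_m be nonempty affine subspaces of E with nonempty intersection S = ⋂ᵢ Uᵢ. Let (x_k)_{k≥0} be any sequence in E such that for every k, x_{k+1} lies in W_{x_k} (the affine span of {x_k, R_{U₁}(x_k), …, R_{U_m}(x_k)}) and x_{k+1} is equidistant from x_k and from each reflection R_{Uᵢ}(x_k). Then for every k ≥ 0, P_S(x_k) = P_S(x₀). -/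
open EuclideanGeometry AffineSubspace

/-- If `y -ᵥ x` is orthogonal to the direction of `s`, the projections agree. -/
lemma projA_eq_of_vsub_mem_orthogonal {E : Type*} [NormedAddCommGroup E]
    [InnerProductSpace ℝ E] [FiniteDimensional ℝ E] (s : AffineSubspace ℝ E)
    (hs : (s : Set E).Nonempty) {x y : E} (h : y - x ∈ s.directionᗮ) :
    projA s hs y = projA s hs x := by
  haveI : Nonempty s := hs.to_subtype
  have hmem : (EuclideanGeometry.orthogonalProjection s x : E) ∈
      (s : Set E) ∩ AffineSubspace.mk' y s.directionᗮ := by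
    refine ⟨EuclideanGeometry.orthogonalProjection_mem x,
      AffineSubspace.mem_mk'.mpr ?_⟩
    have h1 : (EuclideanGeometry.orthogonalProjection s x : E) -ᵥ x ∈ s.directionᗮ :=
      EuclideanGeometry.orthogonalProjection_vsub_mem_direction_orthogonal s x
    have := Submodule.add_mem _ h1 (Submodule.neg_mem _ h)
    simpa [vsub_eq_sub, sub_add, sub_sub] using this
  rw [EuclideanGeometry.inter_eq_singleton_orthogonalProjection y] at hmem
  simp only [Set.mem_singleton_iff] at hmem
  simp [projA, hmem]

lemma step_vsub_mem_orthogonal {E : Type*} [NormedAddCommGroup E]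
    [InnerProductSpace ℝ E] [FiniteDimensional ℝ E] {m : ℕ}
    (U : Fin m → AffineSubspace ℝ E) (hU : ∀ i, ((U i : Set E)).Nonempty)
    {x y : E} (hy : y ∈ Wx U hU x) :
    y - x ∈ (⨅ i, U i : AffineSubspace ℝ E).directionᗮ := by
  set S : AffineSubspace ℝ E := ⨅ i, U i with hSdef
  have hdir : ∀ i, S.direction ≤ (U i).direction := fun i =>
    AffineSubspace.direction_le (iInf_le U i)
  have hle : vectorSpan ℝ (insert x (Set.range fun i => reflA (U i) (hU i) x))
      ≤ S.directionᗮ := by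
    rw [vectorSpan_eq_span_vsub_set_right ℝ (Set.mem_insert x _)]
    rw [Submodule.span_le]
    rintro v ⟨p, hp, rfl⟩
    rcases hp with rfl | ⟨i, rfl⟩
    · simp
    · have h1 : (projA (U i) (hU i) x) - x ∈ (U i).directionᗮ := by
        haveI : Nonempty (U i) := (hU i).to_subtype
        exact EuclideanGeometry.orthogonalProjection_vsub_mem_direction_orthogonal (U i) x
      have h2 : (U i).directionᗮ ≤ S.directionᗮ := Submodule.orthogonal_le (hdir i)
      have h3 : reflA (U i) (hU i) x -ᵥ x = (2 : ℝ) • ((projA (U i) (hU i) x) - x) := by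
        simp [reflA, vsub_eq_sub, two_smul]
        abel
      show reflA (U i) (hU i) x -ᵥ x ∈ (S.directionᗮ : Set E)
      rw [SetLike.mem_coe, h3]
      exact Submodule.smul_mem _ _ (h2 h1)
  have hx : x ∈ Wx U hU x := subset_affineSpan ℝ _ (Set.mem_insert _ _)
  have := AffineSubspace.vsub_mem_direction hy hx
  rw [Wx, direction_affineSpan] at this
  exact hle this

theorem pcrm_sequence_projection_invariant
    {E : Type*} [NormedAddCommGroup E] [InnerProductSpace ℝ E] [FiniteDimensional ℝ E]
    {m : ℕ} (U : Fin m → AffineSubspace ℝ E) (hU : ∀ i, ((U i : Set E)).Nonempty)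
    (hS : ((⨅ i, U i : AffineSubspace ℝ E) : Set E).Nonempty)
    (xs : ℕ → E)
    (hmem : ∀ k, xs (k + 1) ∈ Wx U hU (xs k))
    (hequi : ∀ k, ∀ i, ‖xs (k + 1) - xs k‖ = ‖xs (k + 1) - reflA (U i) (hU i) (xs k)‖) :
    ∀ k, projA (⨅ i, U i) hS (xs k) = projA (⨅ i, U i) hS (xs 0) := by
  set S : AffineSubspace ℝ E := ⨅ i, U i
  intro k
  induction k with
  | zero => rfl
  | succ k ih =>
    rw [← ih]
    exact projA_eq_of_vsub_mem_orthogonal S hS (step_vsub_mem_orthogonal U hU (hmem k))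
end

section
/- Let U₁, …, U_m be nonempty affine subspaces of E, let x ∈ E, and let z be any point of the affine span W_x of {x, R_{U₁}(x), …, R_{U_m}(x)} that is equidistant from x and from each reflection R_{Uᵢ}(x). Then for every i = 1, …, m, dist(z, Uᵢ)² + dist(x, Uᵢ)² ≤ ‖x − z‖². -/
open scoped RealInnerProductSpace


theorem pcrm_distance_decrease
    {E : Type*} [NormedAddCommGroup E] [InnerProductSpace ℝ E] [FiniteDimensional ℝ E]
    {m : ℕ} (U : Fin m → AffineSubspace ℝ E) (hU : ∀ i, ((U i : Set E)).Nonempty)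
    (x z : E) (hz : z ∈ Wx U hU x)
    (hzeq : ∀ i, ‖z - x‖ = ‖z - reflA (U i) (hU i) x‖) :
    ∀ i, Metric.infDist z ((U i : Set E)) ^ 2 + Metric.infDist x ((U i : Set E)) ^ 2 ≤
      ‖x - z‖ ^ 2 := by
  intro i
  haveI : Nonempty (U i) := (hU i).to_subtype
  set p : E := projA (U i) (hU i) x with hp
  have hpmem : p ∈ U i := EuclideanGeometry.orthogonalProjection_mem x
  have h1 : Metric.infDist z ((U i : Set E)) ≤ ‖z - p‖ := by
    simpa [dist_eq_norm] using Metric.infDist_le_dist_of_mem (x := z) hpmem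
  have h2 : Metric.infDist x ((U i : Set E)) ≤ ‖x - p‖ := by
    simpa [dist_eq_norm] using Metric.infDist_le_dist_of_mem (x := x) hpmem
  have hinner : inner ℝ (z - p) (p - x) = (0:ℝ) := by
    have h := hzeq i
    have hr : reflA (U i) (hU i) x = (2:ℝ) • p - x := rfl
    rw [hr] at h
    have ha : z - x = (z - p) + (p - x) := by abel
    have hb : z - ((2:ℝ) • p - x) = (z - p) - (p - x) := by
      rw [two_smul]; abel
    rw [ha, hb] at h
    have h4 := re_inner_eq_norm_add_mul_self_sub_norm_sub_mul_self_div_four (𝕜 := ℝ) (z - p) (p - x)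
    simp only [RCLike.re_to_real] at h4
    rw [h4, h]
    ring
  have hkey : ‖x - z‖ ^ 2 = ‖z - p‖ ^ 2 + ‖p - x‖ ^ 2 := by
    have hx : x - z = -((z - p) + (p - x)) := by abel
    rw [hx, norm_neg]
    have := norm_add_sq_eq_norm_sq_add_norm_sq_real hinner
    nlinarith [this]
  have hne : ‖p - x‖ = ‖x - p‖ := by rw [← norm_neg]; congr 1; abel
  nlinarith [Metric.infDist_nonneg (x := z) (s := ((U i : Set E))),
    Metric.infDist_nonneg (x := x) (s := ((U i : Set E))),
    norm_nonneg (z - p), norm_nonneg (x - p)]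
end

section
/- Let U₁, …, U_m be nonempty affine subspaces of E with nonempty intersection S = ⋂ᵢ Uᵢ. Then there exists a constant r_P < 1 such that for every x ∈ E and every point z of the affine span W_x of {x, R_{U₁}(x), …, R_{U_m}(x)} that is equidistant from x and from each reflection R_{Uᵢ}(x), one has ‖z − P_S(x)‖ ≤ r_P·‖x − P_S(x)‖. -/
set_option maxHeartbeats 1000000 in
open RealInnerProductSpace in
theorem pcrm_contraction
    {E : Type*} [NormedAddCommGroup E] [InnerProductSpace ℝ E] [FiniteDimensional ℝ E]
    {m : ℕ} (U : Fin m → AffineSubspace ℝ E) (hU : ∀ i, ((U i : Set E)).Nonempty)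
    (hS : ((⨅ i, U i : AffineSubspace ℝ E) : Set E).Nonempty) :
    ∃ r : ℝ, r < 1 ∧ ∀ x z : E, z ∈ Wx U hU x →
      (∀ i, ‖z - x‖ = ‖z - reflA (U i) (hU i) x‖) →
      ‖z - projA (⨅ i, U i) hS x‖ ≤ r * ‖x - projA (⨅ i, U i) hS x‖ := by
  classical
  set S : AffineSubspace ℝ E := ⨅ i, U i with hSdef
  haveI : Nonempty S := hS.to_subtype
  haveI : ∀ i, Nonempty (U i) := fun i => (hU i).to_subtype
  obtain ⟨p₀, hp₀⟩ := hS
  have hSle : ∀ i, S ≤ U i := fun i => iInf_le U i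
  -- the direction of S is the intersection of the directions
  have hdir : S.direction = ⨅ i, (U i).direction := by
    apply le_antisymm
    · exact le_iInf fun i => AffineSubspace.direction_le (hSle i)
    · intro v hv
      have hvS : v +ᵥ p₀ ∈ S := by
      -- via affine span of a singleton
        have h1 : affineSpan ℝ ({v +ᵥ p₀} : Set E) ≤ S := by
          rw [hSdef]
          refine le_iInf fun i => ?_
          rw [affineSpan_le, Set.singleton_subset_iff]
          exact AffineSubspace.vadd_mem_of_mem_direction
            ((Submodule.mem_iInf _).1 hv i) (hSle i hp₀)
        exact h1 (mem_affineSpan ℝ (Set.mem_singleton _))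
      simpa using AffineSubspace.vsub_mem_direction hvS hp₀
  -- collect the projections onto orthogonal complements into one linear map
  set F : Submodule ℝ E := S.directionᗮ with hF
  set A : F →ₗ[ℝ] (Fin m → E) := LinearMap.pi (fun i =>
    (((U i).directionᗮ.subtype.comp (Submodule.orthogonalProjectionOnto (U i).directionᗮ).toLinearMap).comp
      F.subtype)) with hA_def
  have hAapp : ∀ (v : F) i, A v i = (Submodule.orthogonalProjectionOnto (U i).directionᗮ (v : E) : E) :=
    fun v i => rfl
  have hker : LinearMap.ker A = ⊥ := by
    rw [LinearMap.ker_eq_bot']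
    intro v hv
    have hvi : ∀ i, (v : E) ∈ (U i).direction := by
      intro i
      have h1 : (Submodule.orthogonalProjectionOnto (U i).directionᗮ (v : E) : E) = 0 := congrFun hv i
      have h2 : (v : E) ∈ ((U i).directionᗮ)ᗮ := by
        rw [← Submodule.orthogonalProjectionOnto_eq_zero_iff]
        exact Subtype.ext h1
      rwa [Submodule.orthogonal_orthogonal] at h2
    have hvd : (v : E) ∈ S.direction := by
      rw [hdir]; exact (Submodule.mem_iInf _).2 hvi
    have h0 : ⟪(v : E), (v : E)⟫ = 0 :=
      (Submodule.mem_orthogonal S.direction (v : E)).1 v.2 _ hvd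
    exact Subtype.ext (inner_self_eq_zero.1 h0)
  obtain ⟨K, hK0, hKA⟩ := A.exists_antilipschitzWith hker
  set Kr : ℝ := max (K : ℝ) 1 with hKr
  have hKr1 : (1 : ℝ) ≤ Kr := le_max_right _ _
  have hKr0 : (0 : ℝ) < Kr := lt_of_lt_of_le one_pos hKr1
  have hsub : (0 : ℝ) ≤ 1 - 1 / Kr ^ 2 := by
    have h1 : 1 / Kr ^ 2 ≤ 1 := by
      rw [div_le_one (by positivity)]
      nlinarith
    linarith
  refine ⟨Real.sqrt (1 - 1 / Kr ^ 2), ?_, ?_⟩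
  · have h2 : 1 - 1 / Kr ^ 2 < 1 := by
      have : 0 < 1 / Kr ^ 2 := by positivity
      linarith
    calc Real.sqrt (1 - 1 / Kr ^ 2) < Real.sqrt 1 := Real.sqrt_lt_sqrt hsub h2
      _ = 1 := Real.sqrt_one
  intro x z hz heq
  set s : E := projA S hS x with hs_def
  set u : E := x - s with hu_def
  set w : E := z - x with hw_def
  have hs_proj : s = (EuclideanGeometry.orthogonalProjection S x : E) := rfl
  have hsS : s ∈ S := EuclideanGeometry.orthogonalProjection_mem x
  have hu : u ∈ F := by
    have := EuclideanGeometry.vsub_orthogonalProjection_mem_direction_orthogonal S x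
    rwa [vsub_eq_sub, ← hs_proj, ← hu_def] at this
  -- equidistance gives the inner products with the v i
  have key1 : ∀ i, ⟪w, (projA (U i) (hU i) x - x)⟫ = ‖projA (U i) (hU i) x - x‖ ^ 2 := by
    intro i
    set v : E := projA (U i) (hU i) x - x with hv_def
    have h2 : z - reflA (U i) (hU i) x = w - (2 : ℝ) • v := by
      rw [reflA, hv_def, hw_def, smul_sub]
      module
    have h1 : ‖w‖ ^ 2 = ‖w - (2 : ℝ) • v‖ ^ 2 := by
      rw [← h2, ← heq i]
    have h3 : ‖w - (2 : ℝ) • v‖ ^ 2 = ‖w‖ ^ 2 - 2 * ⟪w, (2 : ℝ) • v⟫ + ‖(2 : ℝ) • v‖ ^ 2 :=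
      norm_sub_sq_real _ _
    rw [inner_smul_right, norm_smul] at h3
    simp only [Real.norm_ofNat] at h3
    nlinarith [h1, h3]
  -- projections and orthogonality facts per index
  have key2 : ∀ i, ⟪u, (projA (U i) (hU i) x - x)⟫ = -‖projA (U i) (hU i) x - x‖ ^ 2 := by
    intro i
    set p : E := projA (U i) (hU i) x with hp_def
    have hpU : p ∈ U i := EuclideanGeometry.orthogonalProjection_mem x
    have hxp : x - p ∈ (U i).directionᗮ := by
      have := EuclideanGeometry.vsub_orthogonalProjection_mem_direction_orthogonal (U i) x
      rwa [vsub_eq_sub] at this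
    have hps : p - s ∈ (U i).direction := by
      have := AffineSubspace.vsub_mem_direction hpU (hSle i hsS)
      rwa [vsub_eq_sub] at this
    have hdecomp : u = (x - p) + (p - s) := by rw [hu_def]; abel
    have hinner0 : ⟪(p - s : E), (x - p : E)⟫ = 0 :=
      (Submodule.mem_orthogonal _ _).1 hxp _ hps
    rw [hdecomp, inner_add_left]
    have h3 : ⟪(x - p : E), (p - x : E)⟫ = -‖p - x‖ ^ 2 := by
      rw [show (x - p : E) = -(p - x) by abel, inner_neg_left, real_inner_self_eq_norm_sq]
    have h4 : ⟪(p - s : E), (p - x : E)⟫ = 0 := by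
      rw [show (p - x : E) = -(x - p) by abel, inner_neg_right, hinner0, neg_zero]
    rw [h3, h4, add_zero]
  have hAcomp : ∀ i, A ⟨u, hu⟩ i = x - projA (U i) (hU i) x := by
    intro i
    set p : E := projA (U i) (hU i) x with hp_def
    have hpU : p ∈ U i := EuclideanGeometry.orthogonalProjection_mem x
    have hxp : x - p ∈ (U i).directionᗮ := by
      have := EuclideanGeometry.vsub_orthogonalProjection_mem_direction_orthogonal (U i) x
      rwa [vsub_eq_sub] at this
    have hps : p - s ∈ (U i).direction := by
      have := AffineSubspace.vsub_mem_direction hpU (hSle i hsS)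
      rwa [vsub_eq_sub] at this
    have hps' : p - s ∈ ((U i).directionᗮ)ᗮ := Submodule.le_orthogonal_orthogonal _ hps
    have hdecomp : (u : E) = (x - p) + (p - s) := by rw [hu_def]; abel
    rw [hAapp]
    rw [show ((⟨u, hu⟩ : F) : E) = (x - p) + (p - s) from hdecomp, map_add,
      Submodule.orthogonalProjectionOnto_apply_of_mem_orthogonal hps']
    rw [Submodule.coe_add, Submodule.coe_zero, add_zero,
      ← Submodule.starProjection_apply, Submodule.starProjection_eq_self_iff.2 hxp]
  -- the key orthogonality : z - s is orthogonal to w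
  have horthv : ∀ i, ⟪(z - s : E), (projA (U i) (hU i) x - x)⟫ = 0 := by
    intro i
    have : (z - s : E) = u + w := by rw [hu_def, hw_def]; abel
    rw [this, inner_add_left, key1 i, key2 i]
    ring
  have hzw : ⟪(z - s : E), w⟫ = 0 := by
    have hxW : x ∈ Wx U hU x := subset_affineSpan ℝ _ (Set.mem_insert _ _)
    have hwdir : w ∈ (Wx U hU x).direction := by
      have := AffineSubspace.vsub_mem_direction hz hxW
      rwa [vsub_eq_sub, ← hw_def] at this
    have hspan : (Wx U hU x).direction ≤ (ℝ ∙ (z - s))ᗮ := by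
      rw [Wx, direction_affineSpan,
        vectorSpan_eq_span_vsub_set_right ℝ (Set.mem_insert x _), Submodule.span_le]
      rintro y ⟨q, hq, rfl⟩
      rw [SetLike.mem_coe, Submodule.mem_orthogonal_singleton_iff_inner_right]
      rcases hq with rfl | ⟨i, rfl⟩
      · simp
      · simp only [vsub_eq_sub]
        have h5 : reflA (U i) (hU i) x - x = (2 : ℝ) • (projA (U i) (hU i) x - x) := by
          rw [reflA, smul_sub]
          module
        rw [h5, inner_smul_right, horthv i, mul_zero]
    have := hspan hwdir
    rw [Submodule.mem_orthogonal_singleton_iff_inner_right] at this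
    exact this
  -- Pythagoras
  have hpyth : ‖u‖ ^ 2 = ‖z - s‖ ^ 2 + ‖w‖ ^ 2 := by
    have : u = (z - s) - w := by rw [hu_def, hw_def]; abel
    rw [this, norm_sub_sq_real, hzw]
    ring
  -- component bound : each ‖A u i‖ ≤ ‖w‖
  have hcomp : ∀ i, ‖A ⟨u, hu⟩ i‖ ≤ ‖w‖ := by
    intro i
    rw [hAcomp i]
    set v : E := projA (U i) (hU i) x - x with hv_def
    have h5 : ‖(x - projA (U i) (hU i) x : E)‖ = ‖v‖ := by
      rw [hv_def, norm_sub_rev]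
    rw [h5]
    rcases eq_or_lt_of_le (norm_nonneg v) with h6 | h6
    · rw [← h6]; exact norm_nonneg w
    · have h7 : ‖v‖ ^ 2 ≤ ‖w‖ * ‖v‖ := by
        rw [← key1 i, ← hv_def]
        exact real_inner_le_norm w v
      nlinarith [h7, h6]
  have hApi : ‖A ⟨u, hu⟩‖ ≤ ‖w‖ := (pi_norm_le_iff_of_nonneg (norm_nonneg w)).2 hcomp
  -- antilipschitz bound : ‖u‖ ≤ K ‖A u‖
  have hanti : ‖u‖ ≤ (K : ℝ) * ‖A ⟨u, hu⟩‖ := by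
    have h8 := hKA.le_mul_dist ⟨u, hu⟩ 0
    rw [map_zero, dist_zero_right, dist_zero_right] at h8
    simpa using h8
  have huw : ‖u‖ ≤ Kr * ‖w‖ := by
    calc ‖u‖ ≤ (K : ℝ) * ‖A ⟨u, hu⟩‖ := hanti
      _ ≤ Kr * ‖w‖ := by
          apply mul_le_mul (le_max_left _ _) hApi (norm_nonneg _) (le_of_lt hKr0)
  -- final computation
  have hfinal : ‖z - s‖ ^ 2 ≤ (1 - 1 / Kr ^ 2) * ‖u‖ ^ 2 := by
    have h9 : ‖u‖ ^ 2 ≤ Kr ^ 2 * ‖w‖ ^ 2 := by nlinarith [norm_nonneg u, norm_nonneg w]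
    have h10 : ‖u‖ ^ 2 / Kr ^ 2 ≤ ‖w‖ ^ 2 := by
      rw [div_le_iff₀ (by positivity)]
      linarith [h9]
    have : ‖z - s‖ ^ 2 = ‖u‖ ^ 2 - ‖w‖ ^ 2 := by linarith [hpyth]
    rw [this]
    have : (1 - 1 / Kr ^ 2) * ‖u‖ ^ 2 = ‖u‖ ^ 2 - ‖u‖ ^ 2 / Kr ^ 2 := by ring
    rw [this]
    linarith
  have hnorm : ‖x - s‖ = ‖u‖ := by rw [hu_def]
  rw [hnorm]
  have h11 : ‖z - s‖ = Real.sqrt (‖z - s‖ ^ 2) := (Real.sqrt_sq (norm_nonneg _)).symm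
  rw [h11]
  have h12 : Real.sqrt (‖z - s‖ ^ 2) ≤ Real.sqrt ((1 - 1 / Kr ^ 2) * ‖u‖ ^ 2) :=
    Real.sqrt_le_sqrt hfinal
  calc Real.sqrt (‖z - s‖ ^ 2) ≤ Real.sqrt ((1 - 1 / Kr ^ 2) * ‖u‖ ^ 2) := h12
    _ = Real.sqrt (1 - 1 / Kr ^ 2) * ‖u‖ := by
        rw [Real.sqrt_mul hsub, Real.sqrt_sq (norm_nonneg _)]
end

section
/- Let U₁, …, U_m be nonempty affine subspaces of E with nonempty intersection S = ⋂ᵢ Uᵢ, let p₀ ≥ 0 and p₁, …, p_m > 0 with p₀ + p₁ + … + p_m = 1, and define T(x) = p₀·x + Σᵢ₌₁ᵐ pᵢ·P_{Uᵢ}(x). For x ∈ E, let z be any point of the affine span W_x of {x, R_{U₁}(x), …, R_{U_m}(x)} that is equidistant from x and from each reflection R_{Uᵢ}(x). Then ‖z − P_S(x)‖ ≤ ‖T(x) − P_S(x)‖; that is, the P-CRM iterate is at least as close to the limit point P_S(x) as the F-SPM iterate. -/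
open RealInnerProductSpace

theorem projA_mem {E : Type*} [NormedAddCommGroup E] [InnerProductSpace ℝ E]
    [FiniteDimensional ℝ E] (s : AffineSubspace ℝ E) (hs : (s : Set E).Nonempty) (x : E) :
    projA s hs x ∈ s := by
  haveI : Nonempty s := hs.to_subtype
  exact EuclideanGeometry.orthogonalProjection_mem x

theorem projA_orth {E : Type*} [NormedAddCommGroup E] [InnerProductSpace ℝ E]
    [FiniteDimensional ℝ E] (s : AffineSubspace ℝ E) (hs : (s : Set E).Nonempty) (x : E) :
    x - projA s hs x ∈ s.directionᗮ := by
  haveI : Nonempty s := hs.to_subtype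
  exact EuclideanGeometry.vsub_orthogonalProjection_mem_direction_orthogonal s x

theorem pcrm_at_least_as_good_as_fspm
    {E : Type*} [NormedAddCommGroup E] [InnerProductSpace ℝ E] [FiniteDimensional ℝ E]
    {m : ℕ} (U : Fin m → AffineSubspace ℝ E) (hU : ∀ i, ((U i : Set E)).Nonempty)
    (hS : ((⨅ i, U i : AffineSubspace ℝ E) : Set E).Nonempty)
    (p₀ : ℝ) (p : Fin m → ℝ) (hp₀ : 0 ≤ p₀) (hp : ∀ i, 0 < p i)
    (hsum : p₀ + ∑ i, p i = 1)
    (x z : E) (hz : z ∈ Wx U hU x)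
    (hzeq : ∀ i, ‖z - x‖ = ‖z - reflA (U i) (hU i) x‖) :
    ‖z - projA (⨅ i, U i) hS x‖ ≤
      ‖(p₀ • x + ∑ i, p i • projA (U i) (hU i) x) - projA (⨅ i, U i) hS x‖ := by
  set s := projA (⨅ i, U i) hS x with hs_def
  set q : Fin m → E := fun i => projA (U i) (hU i) x with hq_def
  have hsmem : ∀ i, s ∈ U i := fun i => (iInf_le U i) (projA_mem _ hS x)
  -- (a) z is orthogonal: ⟪z - q i, x - q i⟫ = 0
  have ha : ∀ i, ⟪z - q i, x - q i⟫ = 0 := by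
    intro i
    have h := hzeq i
    have h1 : z - x = (z - q i) - (x - q i) := by abel
    have h2 : z - reflA (U i) (hU i) x = (z - q i) + (x - q i) := by
      simp only [hq_def, reflA, two_smul]; abel
    rw [h1, h2] at h
    have h3 := norm_sub_sq_real (z - q i) (x - q i)
    have h4 := norm_add_sq_real (z - q i) (x - q i)
    have h5 : ‖(z - q i) - (x - q i)‖ ^ 2 = ‖(z - q i) + (x - q i)‖ ^ 2 := by rw [h]
    linarith
  -- (b) s is orthogonal: ⟪s - q i, x - q i⟫ = 0
  have hb : ∀ i, ⟪s - q i, x - q i⟫ = 0 := by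
    intro i
    have h1 : s - q i ∈ (U i).direction :=
      AffineSubspace.vsub_mem_direction (hsmem i) (projA_mem _ (hU i) x)
    have h2 := projA_orth (U i) (hU i) x
    exact (Submodule.mem_orthogonal (U i).direction _).mp h2 _ h1
  -- key: ⟪z - s, x - q i⟫ = 0
  have hc : ∀ i, ⟪z - s, x - q i⟫ = 0 := by
    intro i
    have : z - s = (z - q i) - (s - q i) := by abel
    rw [this, inner_sub_left, ha i, hb i, sub_zero]
  -- z - x is in the span of the q i - x
  have hzx : ⟪z - s, z - x⟫ = 0 := by
    have hdir : z - x ∈ vectorSpan ℝ (insert x (Set.range fun i => reflA (U i) (hU i) x)) := by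
      have h := AffineSubspace.vsub_mem_direction hz
        (subset_affineSpan ℝ _ (Set.mem_insert x _) : x ∈ Wx U hU x)
      simp only [Wx] at h
      rwa [direction_affineSpan] at h
    rw [vectorSpan_eq_span_vsub_set_right ℝ (Set.mem_insert x _)] at hdir
    have hK : Submodule.span ℝ
        ((· -ᵥ x) '' insert x (Set.range fun i => reflA (U i) (hU i) x)) ≤ (ℝ ∙ (z - s))ᗮ := by
      rw [Submodule.span_le]
      rintro v ⟨y, hy, rfl⟩
      rw [SetLike.mem_coe, Submodule.mem_orthogonal_singleton_iff_inner_right]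
      rcases hy with rfl | ⟨i, rfl⟩
      · simp
      · have hr : reflA (U i) (hU i) x -ᵥ x = (2:ℝ) • (q i - x) := by
          simp only [hq_def, reflA, two_smul, vsub_eq_sub]; abel
        show ⟪z - s, reflA (U i) (hU i) x -ᵥ x⟫ = 0
        rw [hr, real_inner_smul_right]
        have := hc i
        have h' : ⟪z - s, q i - x⟫ = 0 := by
          have : q i - x = -(x - q i) := by abel
          rw [this, inner_neg_right, hc i, neg_zero]
        rw [h']; ring
    have := hK hdir
    rw [Submodule.mem_orthogonal_singleton_iff_inner_right] at this
    simpa [vsub_eq_sub] using this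
  -- the averaged point
  set w := p₀ • x + ∑ i, p i • q i with hw_def
  have hwx : w - x = ∑ i, p i • (q i - x) := by
    have h1 : ∑ i, p i • (q i - x) = (∑ i, p i • q i) - (∑ i, p i) • x := by
      rw [Finset.sum_smul, ← Finset.sum_sub_distrib]
      simp [smul_sub]
    have h2 : (∑ i, p i) = 1 - p₀ := by linarith
    rw [h1, h2, hw_def, sub_smul, one_smul]; abel
  have hinner : ⟪w - z, z - s⟫ = 0 := by
    have h1 : w - z = (w - x) + (x - z) := by abel
    have h2 : ⟪w - x, z - s⟫ = 0 := by
      rw [hwx, sum_inner]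
      refine Finset.sum_eq_zero fun i _ => ?_
      rw [real_inner_smul_left]
      have : q i - x = -(x - q i) := by abel
      rw [this, inner_neg_left, real_inner_comm, hc i]; ring
    have h3 : ⟪x - z, z - s⟫ = 0 := by
      have : x - z = -(z - x) := by abel
      rw [this, inner_neg_left, real_inner_comm, hzx]; ring
    rw [h1, inner_add_left, h2, h3, add_zero]
  -- Pythagorean conclusion
  have hpyth : ‖w - s‖ ^ 2 = ‖w - z‖ ^ 2 + ‖z - s‖ ^ 2 := by
    have h1 : w - s = (w - z) + (z - s) := by abel
    rw [h1, norm_add_sq_real, hinner]; ring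
  have h2 : ‖z - s‖ ^ 2 ≤ ‖w - s‖ ^ 2 := by nlinarith [sq_nonneg ‖w - z‖]
  have := norm_nonneg (w - s)
  nlinarith [norm_nonneg (z - s)]
end

section
/- Let U be an affine hyperplane in E (an affine subspace whose direction has codimension 1) and let x ∈ E with x ∉ U. Then U is exactly the set of points equidistant from x and its reflection R_U(x): for z ∈ E, ‖z − x‖ = ‖z − R_U(x)‖ if and only if z ∈ U. Consequently, if U₁, …, U_m are affine hyperplanes with nonempty intersection S and x ∉ Uᵢ for every i, then every point z equidistant from x and from each reflection R_{Uᵢ}(x) lies in S, so the P-CRM method converges in a single iteration. -/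
open RealInnerProductSpace in
theorem key_equidistant {E : Type*} [NormedAddCommGroup E] [InnerProductSpace ℝ E]
    [FiniteDimensional ℝ E]
    (U : AffineSubspace ℝ E) (hU : (U : Set E).Nonempty)
    (hd : Module.finrank ℝ U.direction + 1 = Module.finrank ℝ E)
    (x : E) (hx : x ∉ U) (z : E) :
    ‖z - x‖ = ‖z - reflA U hU x‖ ↔ z ∈ U := by
  haveI : Nonempty U := hU.to_subtype
  set p := projA U hU x with hpdef
  have hp : p ∈ U := (EuclideanGeometry.orthogonalProjection U x).2
  have hv : x - p ∈ U.directionᗮ := by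
    have := EuclideanGeometry.vsub_orthogonalProjection_mem_direction_orthogonal U x
    simpa [vsub_eq_sub, hpdef, projA] using this
  have hvne : x - p ≠ 0 := sub_ne_zero.2 fun h => hx (h ▸ hp)
  have h1 : z - x = (z - p) - (x - p) := by abel
  have h2 : z - reflA U hU x = (z - p) + (x - p) := by
    simp only [reflA, hpdef, two_smul]; abel
  have hinner : ‖z - x‖ = ‖z - reflA U hU x‖ ↔ (inner ℝ (z - p) (x - p) : ℝ) = 0 := by
    rw [h1, h2]
    constructor
    · intro h
      have := congrArg (· ^ 2) h
      simp only [← @real_inner_self_eq_norm_sq] at this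
      simp only [inner_sub_sub_self, inner_add_add_self, real_inner_comm (x - p)] at this
      rw [real_inner_comm]; linarith
    · intro h
      exact norm_sub_eq_norm_add (𝕜 := ℝ) (by rw [real_inner_comm]; exact h)
  rw [hinner, ← AffineSubspace.vsub_right_mem_direction_iff_mem hp z, vsub_eq_sub]
  constructor
  · intro h
    have hspan : (ℝ ∙ (x - p)) = U.directionᗮ := by
      apply Submodule.eq_of_le_of_finrank_eq
      · rwa [Submodule.span_singleton_le_iff_mem]
      · rw [finrank_span_singleton hvne]
        have := U.direction.finrank_add_finrank_orthogonal (𝕜 := ℝ)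
        omega
    have : z - p ∈ (ℝ ∙ (x - p))ᗮ :=
      Submodule.mem_orthogonal_singleton_iff_inner_left.2 h
    rw [hspan, Submodule.orthogonal_orthogonal] at this
    exact this
  · intro h
    exact (Submodule.mem_orthogonal _ _).1 hv _ h

theorem hyperplane_equidistant_characterization
    {E : Type*} [NormedAddCommGroup E] [InnerProductSpace ℝ E] [FiniteDimensional ℝ E] :
    (∀ (U : AffineSubspace ℝ E) (hU : (U : Set E).Nonempty),
        Module.finrank ℝ U.direction + 1 = Module.finrank ℝ E →
        ∀ x : E, x ∉ U →
        ∀ z : E, ‖z - x‖ = ‖z - reflA U hU x‖ ↔ z ∈ U) ∧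
    (∀ (m : ℕ) (U : Fin m → AffineSubspace ℝ E) (hU : ∀ i, ((U i : Set E)).Nonempty),
        (∀ i, Module.finrank ℝ (U i).direction + 1 = Module.finrank ℝ E) →
        ((⨅ i, U i : AffineSubspace ℝ E) : Set E).Nonempty →
        ∀ x : E, (∀ i, x ∉ U i) →
        ∀ z : E, (∀ i, ‖z - x‖ = ‖z - reflA (U i) (hU i) x‖) →
          z ∈ (⨅ i, U i : AffineSubspace ℝ E)) := by
  constructor
  · exact fun U hU hd x hx z => key_equidistant U hU hd x hx z
  · intro m U hU hd _ x hx z hz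
    show z ∈ ⋂ s' ∈ Set.range U, (s' : Set E)
    refine Set.mem_iInter₂.2 ?_
    rintro s ⟨i, rfl⟩
    exact (key_equidistant (U i) (hU i) (hd i) x (hx i) z).1 (hz i)
end
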